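/- arXiv:1407.8076 — 2 statements merged into one kernel-verified Lean document; each statement's English description precedes it below -/
import Mathlib

section
/- For the same direct transformation, the polar component of angular momentum is recovered: x·Y − y·X = Θ·c. -/
/-! The `R`-parts cancel in `x Y - y X`; what is left is `Θ` times a `2 × 2` determinant built
from `[[t, q], [q, τ]]` and the rotation by `ψ`, i.e. `Θ (t τ - q ^ 2)`, and `t τ - q ^ 2 = c` because
`(ξ, χ, c)` lies on the unit sphere. -/

theorem mul_sub_sq_eq_of_sq_add_sq_add_sq {K : Type*} [Field K] {ξ χ c : K}
    (h : ξ ^ 2 + χ ^ 2 + c ^ 2 = 1) (hc : 1 + c ≠ 0) :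
    (1 - ξ ^ 2 / (1 + c)) * (1 - χ ^ 2 / (1 + c)) - (ξ * χ / (1 + c)) ^ 2 = c := by
  field_simp
  linear_combination -(1 + c) * h

theorem cross_sub_cross_of_sq_add_sq {R : Type*} [CommRing R] {a b : R} (h : a ^ 2 + b ^ 2 = 1)
    (t τ q : R) :
    (t * b - q * a) * (q * a + τ * b) - (t * a + q * b) * (q * b - τ * a) = t * τ - q ^ 2 := by
  linear_combination (t * τ - q ^ 2) * h

theorem stmt10 (r R Θ ψ ξ χ c t τ q x y X Y : ℝ) (hr : 0 < r)
    (h1 : ξ ^ 2 + χ ^ 2 + c ^ 2 = 1) (hc : c ≠ -1)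
    (ht : t = 1 - ξ ^ 2 / (1 + c)) (hτ : τ = 1 - χ ^ 2 / (1 + c))
    (hq : q = ξ * χ / (1 + c))
    (hx : x = r * (t * Real.cos ψ + q * Real.sin ψ))
    (hy : y = r * (t * Real.sin ψ - q * Real.cos ψ))
    (hX : X = R * (t * Real.cos ψ + q * Real.sin ψ) - Θ / r * (q * Real.cos ψ + τ * Real.sin ψ))
    (hY : Y = R * (t * Real.sin ψ - q * Real.cos ψ) - Θ / r * (q * Real.sin ψ - τ * Real.cos ψ)) :
    x * Y - y * X = Θ * c := by
  have hdet : t * τ - q ^ 2 = c := by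
    subst ht hτ hq
    exact mul_sub_sq_eq_of_sq_add_sq_add_sq h1 fun h => hc (by linear_combination h)
  have hrot := cross_sub_cross_of_sq_add_sq (Real.cos_sq_add_sin_sq ψ) t τ q
  subst hx hy hX hY
  field_simp
  linear_combination Θ * hrot + Θ * hdet
end

section
/- For the same direct transformation, the total angular momentum is recovered: (yZ − zY)² + (zX − xZ)² + (xY − yX)² = Θ². -/
/-! Position and momentum are `r u` and `R u - (Θ / r) w` with
`u = (t cos ψ + q sin ψ, t sin ψ - q cos ψ, ξ)` and `w = (q cos ψ + τ sin ψ, q sin ψ - τ cos ψ, -χ)`.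
Since `ξ² + χ² + c² = 1`, the vectors `(t, q, ξ)` and `(q, τ, -χ)` are orthonormal, and turning their
first two coordinates through `ψ` keeps them so. Hence the angular momentum is `-Θ (u × w)`, and
`u × w` is a unit vector. -/

theorem cross_sq_add_sq_add_sq_eq_one {a b c d e f : ℝ} (hu : a ^ 2 + b ^ 2 + c ^ 2 = 1)
    (hw : d ^ 2 + e ^ 2 + f ^ 2 = 1) (huw : a * d + b * e + c * f = 0) :
    (b * f - c * e) ^ 2 + (c * d - a * f) ^ 2 + (a * e - b * d) ^ 2 = 1 := by
  linear_combination (d ^ 2 + e ^ 2 + f ^ 2) * hu + hw - (a * d + b * e + c * f) * huw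

theorem cross_smul_smul_add_smul_sq {a b c d e f : ℝ} (l m n : ℝ)
    (hu : a ^ 2 + b ^ 2 + c ^ 2 = 1) (hw : d ^ 2 + e ^ 2 + f ^ 2 = 1)
    (huw : a * d + b * e + c * f = 0) :
    (l * b * (m * c + n * f) - l * c * (m * b + n * e)) ^ 2
      + (l * c * (m * a + n * d) - l * a * (m * c + n * f)) ^ 2
      + (l * a * (m * b + n * e) - l * b * (m * a + n * d)) ^ 2 = (l * n) ^ 2 := by
  linear_combination (l * n) ^ 2 * cross_sq_add_sq_add_sq_eq_one hu hw huw

theorem rotate_sq_add_sq (a b ψ : ℝ) :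
    (a * Real.cos ψ + b * Real.sin ψ) ^ 2 + (a * Real.sin ψ - b * Real.cos ψ) ^ 2 = a ^ 2 + b ^ 2 := by
  linear_combination (a ^ 2 + b ^ 2) * Real.sin_sq_add_cos_sq ψ

theorem rotate_mul_add_mul (a b a' b' ψ : ℝ) :
    (a * Real.cos ψ + b * Real.sin ψ) * (a' * Real.cos ψ + b' * Real.sin ψ)
      + (a * Real.sin ψ - b * Real.cos ψ) * (a' * Real.sin ψ - b' * Real.cos ψ) = a * a' + b * b' := by
  linear_combination (a * a' + b * b') * Real.sin_sq_add_cos_sq ψ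

section PoleRotation

variable {ξ χ c : ℝ}

theorem pole_rotation_col₁_sq (h1 : ξ ^ 2 + χ ^ 2 + c ^ 2 = 1) (hc : 1 + c ≠ 0) :
    (1 - ξ ^ 2 / (1 + c)) ^ 2 + (ξ * χ / (1 + c)) ^ 2 + ξ ^ 2 = 1 := by
  field_simp
  linear_combination ξ ^ 2 * h1

theorem pole_rotation_col₂_sq (h1 : ξ ^ 2 + χ ^ 2 + c ^ 2 = 1) (hc : 1 + c ≠ 0) :
    (ξ * χ / (1 + c)) ^ 2 + (1 - χ ^ 2 / (1 + c)) ^ 2 + χ ^ 2 = 1 := by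
  field_simp
  linear_combination χ ^ 2 * h1

theorem pole_rotation_col₁_mul_col₂ (h1 : ξ ^ 2 + χ ^ 2 + c ^ 2 = 1) (hc : 1 + c ≠ 0) :
    (1 - ξ ^ 2 / (1 + c)) * (ξ * χ / (1 + c)) + ξ * χ / (1 + c) * (1 - χ ^ 2 / (1 + c)) = ξ * χ := by
  field_simp
  linear_combination -(ξ * χ) * h1

end PoleRotation

theorem stmt11 (r R Θ ψ ξ χ c t τ q x y z X Y Z : ℝ) (hr : 0 < r)
    (h1 : ξ ^ 2 + χ ^ 2 + c ^ 2 = 1) (hc : c ≠ -1)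
    (ht : t = 1 - ξ ^ 2 / (1 + c)) (hτ : τ = 1 - χ ^ 2 / (1 + c))
    (hq : q = ξ * χ / (1 + c))
    (hx : x = r * (t * Real.cos ψ + q * Real.sin ψ))
    (hy : y = r * (t * Real.sin ψ - q * Real.cos ψ))
    (hz : z = r * ξ)
    (hX : X = R * (t * Real.cos ψ + q * Real.sin ψ) - Θ / r * (q * Real.cos ψ + τ * Real.sin ψ))
    (hY : Y = R * (t * Real.sin ψ - q * Real.cos ψ) - Θ / r * (q * Real.sin ψ - τ * Real.cos ψ))
    (hZ : Z = R * ξ + Θ / r * χ) :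
    (y * Z - z * Y) ^ 2 + (z * X - x * Z) ^ 2 + (x * Y - y * X) ^ 2 = Θ ^ 2 := by
  have hc' : 1 + c ≠ 0 := fun h => hc (by linarith)
  have hu : (t * Real.cos ψ + q * Real.sin ψ) ^ 2 + (t * Real.sin ψ - q * Real.cos ψ) ^ 2
      + ξ ^ 2 = 1 := by
    rw [rotate_sq_add_sq, ht, hq]
    exact pole_rotation_col₁_sq h1 hc'
  have hw : (q * Real.cos ψ + τ * Real.sin ψ) ^ 2 + (q * Real.sin ψ - τ * Real.cos ψ) ^ 2
      + (-χ) ^ 2 = 1 := by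
    rw [rotate_sq_add_sq, neg_sq, hτ, hq]
    exact pole_rotation_col₂_sq h1 hc'
  have huw : (t * Real.cos ψ + q * Real.sin ψ) * (q * Real.cos ψ + τ * Real.sin ψ)
      + (t * Real.sin ψ - q * Real.cos ψ) * (q * Real.sin ψ - τ * Real.cos ψ) + ξ * -χ = 0 := by
    rw [rotate_mul_add_mul, ht, hτ, hq, pole_rotation_col₁_mul_col₂ h1 hc']
    ring
  have hL := cross_smul_smul_add_smul_sq r R (-(Θ / r)) hu hw huw
  rw [show r * -(Θ / r) = -Θ by field_simp] at hL
  rw [hx, hy, hz, hX, hY, hZ]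
  linear_combination hL
end
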